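/- arXiv:2202.12136 — 3 statements merged into one kernel-verified Lean document; each statement's English description precedes it below -/
import Mathlib

section
/- Let H be a Hilbert space and for each parameter s in a normed space X let a_s(u,v) = a(u,v) + s·b(u,v) (with b bilinear from X × H × H to ℝ, linear in s), all a_s uniformly coercive with constant c₀ and bounded. Let F ∈ H* and u(s) solve a_s(u(s), φ) = F(φ) ∀φ. Then s ↦ u(s) is Fréchet differentiable at 0, with derivative ũ[ϑ] ∈ H the unique solution of a(ũ[ϑ], φ) = −b(ϑ)(u(0), φ) for all φ ∈ H, and ‖u(ϑ) − u(0) − ũ[ϑ]‖ ≤ (C/c₀²)‖ϑ‖²‖F‖ for some constant C depending only on the bound of b. -/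
/-!
Subtracting the equations for `u ϑ` and `u 0` gives `a (u ϑ - u 0) φ = - b ϑ (u ϑ) φ`, and then the
remainder `w = u ϑ - u 0 - ut ϑ` solves `a w φ = - b ϑ (u ϑ - u 0) φ`. Testing each of these
equations, and the one for `u ϑ`, with its own solution gives the energy estimates
`c₀ ‖u ϑ‖ ≤ ‖F‖`, `c₀ ‖u ϑ - u 0‖ ≤ Cb ‖ϑ‖ ‖u ϑ‖` and `c₀ ‖w‖ ≤ Cb ‖ϑ‖ ‖u ϑ - u 0‖`,
whose product is `c₀³ ‖w‖ ≤ Cb² ‖ϑ‖² ‖F‖`.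
-/

theorem mul_norm_le_of_coercive_of_eq {E : Type*} [SeminormedAddCommGroup E]
    {a : E → E → ℝ} {ℓ : E → ℝ} {c K : ℝ} {z : E} (hK : 0 ≤ K)
    (hcoer : c * ‖z‖ ^ 2 ≤ a z z) (heq : ∀ φ, a z φ = ℓ φ) (hℓ : ∀ φ, |ℓ φ| ≤ K * ‖φ‖) :
    c * ‖z‖ ≤ K := by
  rcases (norm_nonneg z).eq_or_lt with hz | hz
  · simpa [← hz] using hK
  refine le_of_mul_le_mul_right ?_ hz
  calc c * ‖z‖ * ‖z‖ = c * ‖z‖ ^ 2 := by ring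
    _ ≤ a z z := hcoer
    _ = ℓ z := heq z
    _ ≤ |ℓ z| := le_abs_self _
    _ ≤ K * ‖z‖ := hℓ z

theorem pow_three_mul_le_of_chain {c k x y z M : ℝ} (hc : 0 ≤ c) (hk : 0 ≤ k)
    (hxy : c * x ≤ k * y) (hyz : c * y ≤ k * z) (hz : c * z ≤ M) :
    c ^ 3 * x ≤ k ^ 2 * M :=
  calc c ^ 3 * x = c ^ 2 * (c * x) := by ring
    _ ≤ c ^ 2 * (k * y) := by gcongr
    _ = c * k * (c * y) := by ring
    _ ≤ c * k * (k * z) := by gcongr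
    _ = k ^ 2 * (c * z) := by ring
    _ ≤ k ^ 2 * M := by gcongr

theorem stmt_7_general {X H : Type*} [NormedAddCommGroup X] [NormedSpace ℝ X]
    [NormedAddCommGroup H] [InnerProductSpace ℝ H]
    (a : H → H → ℝ) (b : X → H → H → ℝ) (Cb c₀ : ℝ) (hc₀ : 0 < c₀) (hCb : 0 ≤ Cb)
    (halin₁ : ∀ v : H, IsLinearMap ℝ (fun u => a u v))
    (hblinX : ∀ u v : H, IsLinearMap ℝ (fun s => b s u v))
    (hblin₁ : ∀ (s : X) (v : H), IsLinearMap ℝ (fun u => b s u v))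
    (hbbound : ∀ (s : X) (u v : H), |b s u v| ≤ Cb * ‖s‖ * ‖u‖ * ‖v‖)
    (hcoer : ∀ (s : X) (u : H), c₀ * ‖u‖ ^ 2 ≤ a u u + b s u u)
    (F : H →L[ℝ] ℝ) (u : X → H) (ut : X → H)
    (hu : ∀ (s : X) (φ : H), a (u s) φ + b s (u s) φ = F φ)
    (hut : ∀ (ϑ : X) (φ : H), a (ut ϑ) φ = - b ϑ (u 0) φ) :
    ∃ C : ℝ, 0 < C ∧ ∀ ϑ : X,
      ‖u ϑ - u 0 - ut ϑ‖ ≤ (C / c₀ ^ 2) * ‖ϑ‖ ^ 2 * ‖F‖ := by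
  have hb_zero (p q : H) : b 0 p q = 0 := (hblinX p q).mk' _ |>.map_zero
  have ha_sub (x y φ : H) : a (x - y) φ = a x φ - a y φ := (halin₁ φ).mk' _ |>.map_sub x y
  have hb_sub (s : X) (x y φ : H) : b s (x - y) φ = b s x φ - b s y φ :=
    (hblin₁ s φ).mk' _ |>.map_sub x y
  have ha_coer (x : H) : c₀ * ‖x‖ ^ 2 ≤ a x x := by simpa [hb_zero] using hcoer 0 x
  have hb_neg (s : X) (y φ : H) : |-b s y φ| ≤ Cb * ‖s‖ * ‖y‖ * ‖φ‖ := by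
    simpa only [abs_neg] using hbbound s y φ
  refine ⟨Cb ^ 2 / c₀ + 1, by positivity, fun ϑ => ?_⟩
  have hd_eq (φ : H) : a (u ϑ - u 0) φ = -b ϑ (u ϑ) φ := by
    rw [ha_sub]
    linarith [hu ϑ φ, hu 0 φ, hb_zero (u 0) φ]
  have hw_eq (φ : H) : a (u ϑ - u 0 - ut ϑ) φ = -b ϑ (u ϑ - u 0) φ := by
    rw [ha_sub, hd_eq, hut, hb_sub]
    ring
  have hu_bound : c₀ * ‖u ϑ‖ ≤ ‖F‖ :=
    mul_norm_le_of_coercive_of_eq (a := fun x φ => a x φ + b ϑ x φ) (norm_nonneg F)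
      (hcoer ϑ _) (hu ϑ) F.le_opNorm
  have hd_bound : c₀ * ‖u ϑ - u 0‖ ≤ Cb * ‖ϑ‖ * ‖u ϑ‖ :=
    mul_norm_le_of_coercive_of_eq (by positivity) (ha_coer _) hd_eq (hb_neg ϑ _)
  have hw_bound : c₀ * ‖u ϑ - u 0 - ut ϑ‖ ≤ Cb * ‖ϑ‖ * ‖u ϑ - u 0‖ :=
    mul_norm_le_of_coercive_of_eq (by positivity) (ha_coer _) hw_eq (hb_neg ϑ _)
  have hcube := pow_three_mul_le_of_chain hc₀.le (by positivity) hw_bound hd_bound hu_bound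
  rw [div_mul_eq_mul_div, div_mul_eq_mul_div, le_div_iff₀ (by positivity)]
  calc ‖u ϑ - u 0 - ut ϑ‖ * c₀ ^ 2 = c₀ ^ 3 * ‖u ϑ - u 0 - ut ϑ‖ / c₀ := by
        field_simp
    _ ≤ (Cb * ‖ϑ‖) ^ 2 * ‖F‖ / c₀ := by gcongr
    _ = Cb ^ 2 / c₀ * ‖ϑ‖ ^ 2 * ‖F‖ := by ring
    _ ≤ (Cb ^ 2 / c₀ + 1) * ‖ϑ‖ ^ 2 * ‖F‖ := by gcongr; linarith

/-- Fréchet differentiability of the parameter-to-solution map for `a_s = a + b(s)`. -/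
theorem stmt_7 {X H : Type*} [NormedAddCommGroup X] [NormedSpace ℝ X]
    [NormedAddCommGroup H] [InnerProductSpace ℝ H] [CompleteSpace H]
    (a : H → H → ℝ) (b : X → H → H → ℝ) (Cb Ma c₀ : ℝ) (hc₀ : 0 < c₀) (hCb : 0 ≤ Cb)
    (halin₁ : ∀ v : H, IsLinearMap ℝ (fun u => a u v))
    (halin₂ : ∀ u : H, IsLinearMap ℝ (a u))
    (habound : ∀ u v : H, |a u v| ≤ Ma * ‖u‖ * ‖v‖)
    (hblinX : ∀ u v : H, IsLinearMap ℝ (fun s => b s u v))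
    (hblin₁ : ∀ (s : X) (v : H), IsLinearMap ℝ (fun u => b s u v))
    (hblin₂ : ∀ (s : X) (u : H), IsLinearMap ℝ (b s u))
    (hbbound : ∀ (s : X) (u v : H), |b s u v| ≤ Cb * ‖s‖ * ‖u‖ * ‖v‖)
    (hcoer : ∀ (s : X) (u : H), c₀ * ‖u‖ ^ 2 ≤ a u u + b s u u)
    (F : H →L[ℝ] ℝ) (u : X → H) (ut : X → H)
    (hu : ∀ (s : X) (φ : H), a (u s) φ + b s (u s) φ = F φ)
    (hut : ∀ (ϑ : X) (φ : H), a (ut ϑ) φ = - b ϑ (u 0) φ) :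
    ∃ C : ℝ, 0 < C ∧ ∀ ϑ : X,
      ‖u ϑ - u 0 - ut ϑ‖ ≤ (C / c₀ ^ 2) * ‖ϑ‖ ^ 2 * ‖F‖ :=
  stmt_7_general a b Cb c₀ hc₀ hCb halin₁ hblinX hblin₁ hbbound hcoer F u ut hu hut
end

section
/- Let K be a nonempty convex subset of a Hilbert space H and J : K → ℝ Fréchet differentiable. Suppose (v^{n+1}) is generated from v^n ∈ K by the implicit variational inequality (1/τ)⟨v^{n+1} − v^n, ω − v^{n+1}⟩ + J'(v^n)[ω − v^{n+1}] + A(v^{n+1} − v^n, ω − v^{n+1}) ≥ 0 for all ω ∈ K, where A is a bounded symmetric positive semidefinite bilinear form coming from the quadratic part of J, and assume the Lipschitz-type estimate J(v^{n+1}) ≤ J(v^n) + J'(v^n)[v^{n+1} − v^n] + c₁‖v^{n+1} − v^n‖² holds. If τ ≤ 1/(1 + c₁), then ‖v^{n+1} − v^n‖² + J(v^{n+1}) ≤ J(v^n). -/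
open scoped RealInnerProductSpace

/-- The scheme tested at `ω = vⁿ`, with `d = vⁿ⁺¹ - vⁿ` and `a = A d`. -/
theorem one_div_mul_norm_sq_le_neg_of_scheme {H : Type*} [NormedAddCommGroup H]
    [InnerProductSpace ℝ H] (J' : H →L[ℝ] ℝ) (a : H → ℝ) (ha : IsLinearMap ℝ a) {d : H}
    (had : 0 ≤ a d) {τ : ℝ} (h : 0 ≤ (1 / τ) * ⟪d, -d⟫ + J' (-d) + a (-d)) :
    1 / τ * ‖d‖ ^ 2 ≤ -J' d := by
  rw [inner_neg_right, real_inner_self_eq_norm_sq, map_neg, ha.map_neg] at h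
  linarith

theorem add_le_one_div_of_le_one_div_add {τ c : ℝ} (hτ : 0 < τ) (hτc : τ ≤ 1 / (1 + c)) :
    1 + c ≤ 1 / τ := by
  have hc : 0 < 1 + c := by
    by_contra! hc
    linarith [one_div_nonpos.mpr hc]
  exact (le_one_div hτ hc).mp hτc

theorem stmt_10_general {H : Type*} [NormedAddCommGroup H] [InnerProductSpace ℝ H]
    (K : Set H)
    (J : H → ℝ) (J' : H →L[ℝ] ℝ) (A : H → H → ℝ)
    (hAlin₂ : ∀ u : H, IsLinearMap ℝ (A u))
    (hApsd : ∀ u : H, 0 ≤ A u u)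
    (vn vnp : H) (hvn : vn ∈ K)
    (τ c₁ : ℝ) (hτ : 0 < τ)
    (hscheme : ∀ ω ∈ K,
      0 ≤ (1/τ) * inner ℝ (vnp - vn) (ω - vnp) + J' (ω - vnp) + A (vnp - vn) (ω - vnp))
    (htaylor : J vnp ≤ J vn + J' (vnp - vn) + c₁ * ‖vnp - vn‖ ^ 2)
    (hτsmall : τ ≤ 1 / (1 + c₁)) :
    ‖vnp - vn‖ ^ 2 + J vnp ≤ J vn := by
  have htest := hscheme vn hvn
  rw [show vn - vnp = -(vnp - vn) by abel] at htest
  have hdescent := one_div_mul_norm_sq_le_neg_of_scheme J' _ (hAlin₂ (vnp - vn))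
    (hApsd (vnp - vn)) htest
  have hstep : (1 + c₁) * ‖vnp - vn‖ ^ 2 ≤ 1 / τ * ‖vnp - vn‖ ^ 2 :=
    mul_le_mul_of_nonneg_right (add_le_one_div_of_le_one_div_add hτ hτsmall) (sq_nonneg _)
  linarith

/-- One-step energy decay of the semi-implicit scheme for the parabolic obstacle problem. -/
theorem stmt_10 {H : Type*} [NormedAddCommGroup H] [InnerProductSpace ℝ H]
    (K : Set H) (hKconv : Convex ℝ K)
    (J : H → ℝ) (J' : H →L[ℝ] ℝ) (A : H → H → ℝ)
    (hAlin₁ : ∀ v : H, IsLinearMap ℝ (fun u => A u v))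
    (hAlin₂ : ∀ u : H, IsLinearMap ℝ (A u))
    (hAsymm : ∀ u v : H, A u v = A v u)
    (hApsd : ∀ u : H, 0 ≤ A u u)
    (vn vnp : H) (hvn : vn ∈ K) (hvnp : vnp ∈ K)
    (τ c₁ : ℝ) (hτ : 0 < τ)
    (hscheme : ∀ ω ∈ K,
      0 ≤ (1/τ) * inner ℝ (vnp - vn) (ω - vnp) + J' (ω - vnp) + A (vnp - vn) (ω - vnp))
    (htaylor : J vnp ≤ J vn + J' (vnp - vn) + c₁ * ‖vnp - vn‖ ^ 2)
    (hτsmall : τ ≤ 1 / (1 + c₁)) :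
    ‖vnp - vn‖ ^ 2 + J vnp ≤ J vn :=
  stmt_10_general K J J' A hAlin₂ hApsd vn vnp hvn τ c₁ hτ hscheme htaylor hτsmall
end

section
/- Let H be a Hilbert space and G_k a sequence of closed subspaces of H converging in the sense of Mosco to a closed subspace G. Let a : H × H → ℝ be a bounded coercive symmetric bilinear form and F ∈ H*. Let u_k ∈ G_k and u ∈ G be the unique solutions of a(u_k, φ) = F(φ) ∀φ ∈ G_k and a(u, φ) = F(φ) ∀φ ∈ G. Then u_k ⇀ u weakly in H and a(u_k, u_k) = F(u_k) → F(u) = a(u, u), provided F is sequentially continuous with respect to weak convergence restricted to bounded sets (e.g., F compactly factors through a compact embedding). -/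
/-!
Coercivity bounds the Galerkin solutions: `c₀ ‖u_k‖² ≤ a(u_k, u_k) = F(u_k) ≤ ‖F‖ ‖u_k‖`.
A bounded sequence in a Hilbert space has a weakly convergent subsequence (sequential
Banach–Alaoglu, applied in the separable closed span of the sequence). A weak subsequential
limit `w` lies in `G` by Mosco (i); testing the equation on `G_k` with a recovery sequence
`v_k → v` from Mosco (ii), and using that `a(u_k, v_k) → a(w, v)` when `u_k ⇀ w` boundedly and
`v_k → v` strongly, gives `a(w, v) = F(v)` on `G`, so `w = u` by coercivity. As every subsequence
has a further subsequence converging weakly to `u`, so does the whole sequence, and then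
`a(u_k, u_k) = F(u_k) → F(u) = a(u, u)` by the weak continuity of `F`.
-/

open Filter Topology

section

variable {E : Type*} [NormedAddCommGroup E] [NormedSpace ℝ E]

theorem exists_continuousLinearMap₂_eq {a : E → E → ℝ} {M : ℝ}
    (hlin₁ : ∀ v : E, IsLinearMap ℝ (fun u => a u v)) (hlin₂ : ∀ u : E, IsLinearMap ℝ (a u))
    (hbound : ∀ u v : E, |a u v| ≤ M * ‖u‖ * ‖v‖) :
    ∃ B : E →L[ℝ] E →L[ℝ] ℝ, ∀ u v, B u v = a u v :=
  ⟨LinearMap.mkContinuous₂ (LinearMap.mk₂ ℝ a (fun u₁ u₂ v => (hlin₁ v).map_add u₁ u₂)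
      (fun c u v => (hlin₁ v).map_smul c u) (fun u v₁ v₂ => (hlin₂ u).map_add v₁ v₂)
      (fun c u v => (hlin₂ u).map_smul c v)) M hbound, fun _ _ => rfl⟩

theorem norm_le_opNorm_div_of_mul_sq_le (F : E →L[ℝ] ℝ) {c₀ : ℝ} (hc₀ : 0 < c₀) {x : E}
    (hx : c₀ * ‖x‖ ^ 2 ≤ F x) : ‖x‖ ≤ ‖F‖ / c₀ := by
  rw [le_div_iff₀ hc₀]
  rcases (norm_nonneg x).eq_or_lt with h0 | h0
  · rw [← h0, zero_mul]
    exact norm_nonneg F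
  · have hF : F x ≤ ‖F‖ * ‖x‖ := (le_abs_self _).trans (F.le_opNorm x)
    nlinarith

theorem eq_of_forall_apply_eq_of_coercive {B : E →L[ℝ] E →L[ℝ] ℝ} {c₀ : ℝ} (hc₀ : 0 < c₀)
    (hcoer : ∀ u, c₀ * ‖u‖ ^ 2 ≤ B u u) {G : Submodule ℝ E} {w u : E} (hw : w ∈ G) (hu : u ∈ G)
    (h : ∀ v ∈ G, B w v = B u v) : w = u := by
  have hzero : B (w - u) (w - u) = 0 := by
    rw [map_sub B, sub_apply, h _ (G.sub_mem hw hu), sub_self]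
  have hsq : ‖w - u‖ ^ 2 = 0 := by nlinarith [hcoer (w - u), sq_nonneg ‖w - u‖]
  exact sub_eq_zero.1 (norm_eq_zero.1 (pow_eq_zero_iff two_ne_zero |>.1 hsq))

def WeakTendsto {H : Type*} [NormedAddCommGroup H] [InnerProductSpace ℝ H] (x : ℕ → H) (w : H) :
    Prop :=
  ∀ z : H, Tendsto (fun j => (inner ℝ (x j) z : ℝ)) atTop (𝓝 (inner ℝ w z))

variable {H : Type*} [NormedAddCommGroup H] [InnerProductSpace ℝ H] [CompleteSpace H]

theorem WeakTendsto.tendsto_apply {x : ℕ → H} {w : H} (hx : WeakTendsto x w) (T : H →L[ℝ] ℝ) :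
    Tendsto (fun j => T (x j)) atTop (𝓝 (T w)) := by
  have hT : ∀ v, T v = inner ℝ v ((InnerProductSpace.toDual ℝ H).symm T) := fun v => by
    rw [real_inner_comm, InnerProductSpace.toDual_symm_apply]
  simp only [hT]
  exact hx _

theorem WeakTendsto.tendsto_apply₂ (B : H →L[ℝ] E →L[ℝ] ℝ) {x : ℕ → H} {w : H} {C : ℝ}
    (hx : WeakTendsto x w) (hC : ∀ j, ‖x j‖ ≤ C) {v : ℕ → E} {v₀ : E}
    (hv : Tendsto v atTop (𝓝 v₀)) :
    Tendsto (fun j => B (x j) (v j)) atTop (𝓝 (B w v₀)) := by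
  have hsplit : ∀ j, B (x j) (v j) = B.flip v₀ (x j) + B (x j) (v j - v₀) := fun j => by
    simp
  have hrem : Tendsto (fun j => B (x j) (v j - v₀)) atTop (𝓝 0) := by
    refine squeeze_zero_norm (fun j => (B.le_opNorm₂ _ _).trans ?_)
      ((tendsto_iff_norm_sub_tendsto_zero.1 hv).const_mul (‖B‖ * C) |>.trans (by simp))
    gcongr
    exact hC j
  have hlim := (hx.tendsto_apply (B.flip v₀)).add hrem
  rw [ContinuousLinearMap.flip_apply, add_zero] at hlim
  exact hlim.congr fun j => (hsplit j).symm

theorem exists_weakTendsto_subseq_of_bounded {x : ℕ → H} {C : ℝ} (hC : ∀ k, ‖x k‖ ≤ C) :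
    ∃ φ : ℕ → ℕ, StrictMono φ ∧ ∃ w, WeakTendsto (x ∘ φ) w := by
  set K := (Submodule.span ℝ (Set.range x)).topologicalClosure
  have hxK : ∀ k, x k ∈ K := fun k =>
    Submodule.le_topologicalClosure _ (Submodule.subset_span ⟨k, rfl⟩)
  have : TopologicalSpace.SeparableSpace K :=
    (((Set.countable_range x).isSeparable.span (R := ℝ)).closure).separableSpace
  set y : ℕ → WeakDual ℝ K := fun k =>
    StrongDual.toWeakDual (InnerProductSpace.toDual ℝ K ⟨x k, hxK k⟩)
  obtain ⟨ℓ, -, φ, hφ, hℓ⟩ := WeakDual.isSeqCompact_closedBall ℝ K 0 C (x := y) fun k => by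
    simpa [y] using hC k
  refine ⟨φ, hφ, (InnerProductSpace.toDual ℝ K).symm (WeakDual.toStrongDual ℓ), fun z => ?_⟩
  have hP : ∀ v : K, (inner ℝ (v : H) z : ℝ) = inner ℝ v (K.orthogonalProjectionOnto z) :=
    fun v => (K.inner_orthogonalProjectionOnto_eq_of_mem_left v z).symm
  simp only [Function.comp_apply, hP ⟨x _, hxK _⟩, hP, InnerProductSpace.toDual_symm_apply]
  exact ((WeakDual.eval_continuous _).tendsto ℓ).comp hℓ

theorem weakTendsto_of_forall_subseq {x : ℕ → H} {C : ℝ} {u : H} (hC : ∀ k, ‖x k‖ ≤ C)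
    (h : ∀ φ : ℕ → ℕ, StrictMono φ → ∀ w, WeakTendsto (x ∘ φ) w → w = u) :
    WeakTendsto x u := by
  intro z
  refine tendsto_of_subseq_tendsto fun ns hns => ?_
  obtain ⟨ψ, -, hψ⟩ := strictMono_subseq_of_tendsto_atTop hns
  obtain ⟨χ, hχ, w, hw⟩ := exists_weakTendsto_subseq_of_bounded fun k => hC ((ns ∘ ψ) k)
  obtain rfl : w = u := h _ (hψ.comp hχ) w hw
  exact ⟨ψ ∘ χ, hw z⟩

theorem forall_apply_eq_of_weakTendsto_comp {G : Submodule ℝ H} {Gk : ℕ → Submodule ℝ H}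
    (hrecov : ∀ w ∈ G, ∃ vk : ℕ → H, (∀ k, vk k ∈ Gk k) ∧
      Tendsto (fun k => ‖vk k - w‖) atTop (𝓝 0))
    {B : H →L[ℝ] H →L[ℝ] ℝ} {F : H →L[ℝ] ℝ} {uk : ℕ → H} {C : ℝ} (hC : ∀ k, ‖uk k‖ ≤ C)
    (huk : ∀ k, ∀ φ ∈ Gk k, B (uk k) φ = F φ) {ψ : ℕ → ℕ} (hψ : Tendsto ψ atTop atTop) {w : H}
    (hw : WeakTendsto (uk ∘ ψ) w) : ∀ v ∈ G, B w v = F v := by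
  intro v hv
  obtain ⟨vk, hvk, hvk_lim⟩ := hrecov v hv
  have hvψ : Tendsto (vk ∘ ψ) atTop (𝓝 v) :=
    (tendsto_iff_norm_sub_tendsto_zero.2 hvk_lim).comp hψ
  refine tendsto_nhds_unique (hw.tendsto_apply₂ B (fun j => hC (ψ j)) hvψ) ?_
  simp only [Function.comp_apply, huk _ _ (hvk _)]
  exact (F.continuous.tendsto v).comp hvψ

end

theorem stmt_15_general {H : Type*} [NormedAddCommGroup H] [InnerProductSpace ℝ H] [CompleteSpace H]
    (G : Submodule ℝ H) (Gk : ℕ → Submodule ℝ H)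
    -- Mosco condition (i): weak limits of (sub)sequences from `G_{k_j}` lie in `G`
    (hMosco₁ : ∀ (φ : ℕ → ℕ) (uj : ℕ → H) (w : H), StrictMono φ →
      (∀ j, uj j ∈ Gk (φ j)) →
      (∀ z : H, Tendsto (fun j => (inner ℝ (uj j) z : ℝ)) atTop (𝓝 (inner ℝ w z))) →
      w ∈ G)
    -- Mosco condition (ii): strong recovery sequences
    (hMosco₂ : ∀ w ∈ G, ∃ uk : ℕ → H, (∀ k, uk k ∈ Gk k) ∧
      Tendsto (fun k => ‖uk k - w‖) atTop (𝓝 0))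
    (a : H → H → ℝ) (M c₀ : ℝ) (hc₀ : 0 < c₀)
    (halin₁ : ∀ v : H, IsLinearMap ℝ (fun u => a u v))
    (halin₂ : ∀ u : H, IsLinearMap ℝ (a u))
    (hbound : ∀ u v : H, |a u v| ≤ M * ‖u‖ * ‖v‖)
    (hcoer : ∀ u : H, c₀ * ‖u‖ ^ 2 ≤ a u u)
    (F : H →L[ℝ] ℝ)
    -- `F` is sequentially continuous w.r.t. weak convergence of bounded sequences
    (hFweak : ∀ (uj : ℕ → H) (w : H), (∃ C, ∀ j, ‖uj j‖ ≤ C) →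
      (∀ z : H, Tendsto (fun j => (inner ℝ (uj j) z : ℝ)) atTop (𝓝 (inner ℝ w z))) →
      Tendsto (fun j => F (uj j)) atTop (𝓝 (F w)))
    (uk : ℕ → H) (u : H)
    (hukmem : ∀ k, uk k ∈ Gk k) (humem : u ∈ G)
    (huk : ∀ k, ∀ φ ∈ Gk k, a (uk k) φ = F φ)
    (hu : ∀ φ ∈ G, a u φ = F φ) :
    (∀ z : H, Tendsto (fun k => (inner ℝ (uk k) z : ℝ)) atTop (𝓝 (inner ℝ u z))) ∧
    Tendsto (fun k => a (uk k) (uk k)) atTop (𝓝 (a u u)) := by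
  obtain ⟨B, hB⟩ := exists_continuousLinearMap₂_eq halin₁ halin₂ hbound
  simp only [← hB] at hcoer huk hu ⊢
  have hbdd : ∀ k, ‖uk k‖ ≤ ‖F‖ / c₀ := fun k =>
    norm_le_opNorm_div_of_mul_sq_le F hc₀ ((hcoer _).trans_eq (huk k _ (hukmem k)))
  have hweak : WeakTendsto uk u := weakTendsto_of_forall_subseq hbdd fun ψ hψ w hw => by
    have hwG : w ∈ G := hMosco₁ ψ _ w hψ (fun j => hukmem (ψ j)) hw
    have hw_solves := forall_apply_eq_of_weakTendsto_comp hMosco₂ hbdd huk hψ.tendsto_atTop hw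
    exact eq_of_forall_apply_eq_of_coercive hc₀ hcoer hwG humem fun v hv =>
      (hw_solves v hv).trans (hu v hv).symm
  refine ⟨hweak, ?_⟩
  simp only [huk _ _ (hukmem _), hu u humem]
  exact hFweak uk u ⟨_, hbdd⟩ hweak

/-- Convergence of Galerkin/Mosco approximations: if `G_k → G` in the sense of Mosco and the
right-hand side is weakly sequentially continuous on bounded sets, then the solutions on `G_k`
converge weakly to the solution on `G` and the energies converge. -/
theorem stmt_15 {H : Type*} [NormedAddCommGroup H] [InnerProductSpace ℝ H] [CompleteSpace H]
    (G : Submodule ℝ H) (Gk : ℕ → Submodule ℝ H)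
    (hGcl : IsClosed (G : Set H)) (hGkcl : ∀ k, IsClosed ((Gk k : Submodule ℝ H) : Set H))
    -- Mosco condition (i): weak limits of (sub)sequences from `G_{k_j}` lie in `G`
    (hMosco₁ : ∀ (φ : ℕ → ℕ) (uj : ℕ → H) (w : H), StrictMono φ →
      (∀ j, uj j ∈ Gk (φ j)) →
      (∀ z : H, Tendsto (fun j => (inner ℝ (uj j) z : ℝ)) atTop (𝓝 (inner ℝ w z))) →
      w ∈ G)
    -- Mosco condition (ii): strong recovery sequences
    (hMosco₂ : ∀ w ∈ G, ∃ uk : ℕ → H, (∀ k, uk k ∈ Gk k) ∧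
      Tendsto (fun k => ‖uk k - w‖) atTop (𝓝 0))
    (a : H → H → ℝ) (M c₀ : ℝ) (hc₀ : 0 < c₀)
    (halin₁ : ∀ v : H, IsLinearMap ℝ (fun u => a u v))
    (halin₂ : ∀ u : H, IsLinearMap ℝ (a u))
    (hsymm : ∀ u v : H, a u v = a v u)
    (hbound : ∀ u v : H, |a u v| ≤ M * ‖u‖ * ‖v‖)
    (hcoer : ∀ u : H, c₀ * ‖u‖ ^ 2 ≤ a u u)
    (F : H →L[ℝ] ℝ)
    -- `F` is sequentially continuous w.r.t. weak convergence of bounded sequences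
    (hFweak : ∀ (uj : ℕ → H) (w : H), (∃ C, ∀ j, ‖uj j‖ ≤ C) →
      (∀ z : H, Tendsto (fun j => (inner ℝ (uj j) z : ℝ)) atTop (𝓝 (inner ℝ w z))) →
      Tendsto (fun j => F (uj j)) atTop (𝓝 (F w)))
    (uk : ℕ → H) (u : H)
    (hukmem : ∀ k, uk k ∈ Gk k) (humem : u ∈ G)
    (huk : ∀ k, ∀ φ ∈ Gk k, a (uk k) φ = F φ)
    (hu : ∀ φ ∈ G, a u φ = F φ) :
    (∀ z : H, Tendsto (fun k => (inner ℝ (uk k) z : ℝ)) atTop (𝓝 (inner ℝ u z))) ∧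
    Tendsto (fun k => a (uk k) (uk k)) atTop (𝓝 (a u u)) :=
  stmt_15_general G Gk hMosco₁ hMosco₂ a M c₀ hc₀ halin₁ halin₂ hbound hcoer F hFweak uk u hukmem
    humem huk hu
end
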